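/- arXiv:1501.02205 — 4 statements merged into one kernel-verified Lean document; each statement's English description precedes it below -/
import Mathlib

section
/- Under the assumptions a < 0, A > 0, b > 0, B > 0, c > 0 and 0 < (b − B − c) < 2(A − a)·min(X̂, Ŷ), the minimizer p̂ of Π(p̂ + c) + π(p̂) over p̂ ≥ 0 is p̂ = (bA − cA − Ba)/(A − a), and the corresponding equilibrium transport volume is z(c) = (b − c − B)/(2(A − a)). -/
set_option maxHeartbeats 1000000


/-- Equilibrium producer price and transport volume under perfect competition. -/
theorem stmt_2 (a A b B c Xhat Yhat : ℝ)
    (ha : a < 0) (hA : 0 < A) (hb : 0 < b) (hB : 0 < B) (hc : 0 < c)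
    (hX : 0 < Xhat) (hY : 0 < Yhat) (hX2 : Xhat ≤ -b / (2 * a))
    (hint : 0 < b - B - c) (hint2 : b - B - c < 2 * (A - a) * min Xhat Yhat)
    (Pi pi : ℝ → ℝ)
    (hPi : ∀ p, Pi p = if b + 2 * a * Xhat ≤ p then -(max (b - p) 0) ^ 2 / (4 * a)
      else (b - p) * Xhat + a * Xhat ^ 2)
    (hpi : ∀ p, pi p = if p ≤ B + 2 * A * Yhat then (max (p - B) 0) ^ 2 / (4 * A)
      else (p - B) * Yhat - A * Yhat ^ 2) :
    IsMinOn (fun p => Pi (p + c) + pi p) {p : ℝ | 0 ≤ p} ((b * A - c * A - B * a) / (A - a)) ∧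
    max ((b * A - c * A - B * a) / (A - a) - B) 0 / (2 * A) = (b - c - B) / (2 * (A - a)) := by
  have hD : (0:ℝ) < A - a := by linarith
  have hD' : A - a ≠ 0 := ne_of_gt hD
  have ha' : a ≠ 0 := ne_of_lt ha
  have hA' : A ≠ 0 := ne_of_gt hA
  have ht : 0 < b - B - c := hint
  have hTX : b - B - c < 2 * (A - a) * Xhat :=
    lt_of_lt_of_le hint2 (by nlinarith [min_le_left Xhat Yhat])
  have hTY : b - B - c < 2 * (A - a) * Yhat :=
    lt_of_lt_of_le hint2 (by nlinarith [min_le_right Xhat Yhat])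
  set phat := (b * A - c * A - B * a) / (A - a) with hphat
  have e1 : b - (phat + c) = -(a * (b - B - c)) / (A - a) := by
    rw [hphat]; field_simp; ring
  have e2 : phat - B = A * (b - B - c) / (A - a) := by
    rw [hphat]; field_simp; ring
  have he1pos : 0 ≤ b - (phat + c) := by
    rw [e1]; apply div_nonneg (by nlinarith) hD.le
  have he2pos : 0 ≤ phat - B := by
    rw [e2]; apply div_nonneg (by nlinarith) hD.le
  have key1 : b + 2 * a * Xhat ≤ phat + c := by
    have h1 : -(a * (b - B - c)) / (A - a) ≤ -(2 * a * Xhat) := by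
      rw [div_le_iff₀ hD]
      nlinarith [mul_nonneg (neg_nonneg.mpr ha.le)
        (by linarith : (0:ℝ) ≤ 2 * (A - a) * Xhat - (b - B - c))]
    linarith [e1]
  have key2 : phat ≤ B + 2 * A * Yhat := by
    have h1 : A * (b - B - c) / (A - a) ≤ 2 * A * Yhat := by
      rw [div_le_iff₀ hD]
      nlinarith [mul_nonneg hA.le
        (by linarith : (0:ℝ) ≤ 2 * (A - a) * Yhat - (b - B - c))]
    linarith [e2]
  have hfphat : Pi (phat + c) + pi phat = (b - B - c) ^ 2 / (4 * (A - a)) := by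
    rw [hPi, hpi, if_pos key1, if_pos key2, max_eq_left he1pos, max_eq_left he2pos, e1, e2]
    field_simp
    ring
  have L1 : ∀ q, -a * (b - B - c) ^ 2 / (4 * (A - a) ^ 2)
      + (b - B - c) / (2 * (A - a)) * ((b - q) - -(a * (b - B - c)) / (A - a)) ≤ Pi q := by
    intro q
    rw [hPi]
    split_ifs with h
    · rcases le_total (b - q) 0 with h2 | h2
      · rw [max_eq_right h2]
        have key : -(0:ℝ) ^ 2 / (4 * a) - (-a * (b - B - c) ^ 2 / (4 * (A - a) ^ 2)
            + (b - B - c) / (2 * (A - a)) * ((b - q) - -(a * (b - B - c)) / (A - a)))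
            = (-(a * (b - B - c) ^ 2) - 2 * (b - B - c) * (b - q) * (A - a)) / (4 * (A - a) ^ 2) := by
          field_simp; ring
        have hk : 0 ≤ (-(a * (b - B - c) ^ 2) - 2 * (b - B - c) * (b - q) * (A - a))
            / (4 * (A - a) ^ 2) := by
          apply div_nonneg _ (by positivity)
          nlinarith [mul_nonneg (mul_nonneg ht.le (neg_nonneg.mpr h2)) hD.le,
            mul_nonneg (neg_nonneg.mpr ha.le) (sq_nonneg (b - B - c))]
        linarith
      · rw [max_eq_left h2]
        have key : -(b - q) ^ 2 / (4 * a) - (-a * (b - B - c) ^ 2 / (4 * (A - a) ^ 2)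
            + (b - B - c) / (2 * (A - a)) * ((b - q) - -(a * (b - B - c)) / (A - a)))
            = ((b - q) - -(a * (b - B - c)) / (A - a)) ^ 2 / -(4 * a) := by
          field_simp; ring
        have hk : 0 ≤ ((b - q) - -(a * (b - B - c)) / (A - a)) ^ 2 / -(4 * a) :=
          div_nonneg (sq_nonneg _) (by linarith)
        linarith
    · have hS : -(2 * a * Xhat) < b - q := by push_neg at h; linarith
      rw [← sub_nonneg]
      have key : (b - q) * Xhat + a * Xhat ^ 2 - (-a * (b - B - c) ^ 2 / (4 * (A - a) ^ 2)
          + (b - B - c) / (2 * (A - a)) * ((b - q) - -(a * (b - B - c)) / (A - a)))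
          = ((b - q) * (2 * (A - a) * Xhat - (b - B - c)) * (2 * (A - a))
            + 4 * a * (A - a) ^ 2 * Xhat ^ 2 - a * (b - B - c) ^ 2) / (4 * (A - a) ^ 2) := by
        field_simp; ring
      rw [key]
      apply div_nonneg _ (by positivity)
      nlinarith [mul_nonneg (mul_nonneg (by linarith : (0:ℝ) ≤ 2 * (A - a))
          (by linarith : (0:ℝ) ≤ 2 * (A - a) * Xhat - (b - B - c)))
          (by linarith : (0:ℝ) ≤ (b - q) + 2 * a * Xhat),
        mul_nonneg (neg_nonneg.mpr ha.le) (sq_nonneg (2 * (A - a) * Xhat - (b - B - c)))]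
  have L2 : ∀ p, A * (b - B - c) ^ 2 / (4 * (A - a) ^ 2)
      + (b - B - c) / (2 * (A - a)) * ((p - B) - A * (b - B - c) / (A - a)) ≤ pi p := by
    intro p
    rw [hpi]
    split_ifs with h
    · rcases le_total (p - B) 0 with h2 | h2
      · rw [max_eq_right h2]
        have key : (0:ℝ) ^ 2 / (4 * A) - (A * (b - B - c) ^ 2 / (4 * (A - a) ^ 2)
            + (b - B - c) / (2 * (A - a)) * ((p - B) - A * (b - B - c) / (A - a)))
            = (A * (b - B - c) ^ 2 - 2 * (b - B - c) * (p - B) * (A - a)) / (4 * (A - a) ^ 2) := by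
          field_simp; ring
        have hk : 0 ≤ (A * (b - B - c) ^ 2 - 2 * (b - B - c) * (p - B) * (A - a))
            / (4 * (A - a) ^ 2) := by
          apply div_nonneg _ (by positivity)
          nlinarith [mul_nonneg (mul_nonneg ht.le (neg_nonneg.mpr h2)) hD.le,
            mul_nonneg hA.le (sq_nonneg (b - B - c))]
        linarith
      · rw [max_eq_left h2]
        have key : (p - B) ^ 2 / (4 * A) - (A * (b - B - c) ^ 2 / (4 * (A - a) ^ 2)
            + (b - B - c) / (2 * (A - a)) * ((p - B) - A * (b - B - c) / (A - a)))
            = ((p - B) - A * (b - B - c) / (A - a)) ^ 2 / (4 * A) := by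
          field_simp; ring
        have hk : 0 ≤ ((p - B) - A * (b - B - c) / (A - a)) ^ 2 / (4 * A) :=
          div_nonneg (sq_nonneg _) (by positivity)
        linarith
    · have hU : 2 * A * Yhat < p - B := by push_neg at h; linarith
      rw [← sub_nonneg]
      have key : (p - B) * Yhat - A * Yhat ^ 2 - (A * (b - B - c) ^ 2 / (4 * (A - a) ^ 2)
          + (b - B - c) / (2 * (A - a)) * ((p - B) - A * (b - B - c) / (A - a)))
          = ((p - B) * (2 * (A - a) * Yhat - (b - B - c)) * (2 * (A - a))
            - 4 * A * (A - a) ^ 2 * Yhat ^ 2 + A * (b - B - c) ^ 2) / (4 * (A - a) ^ 2) := by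
        field_simp; ring
      rw [key]
      apply div_nonneg _ (by positivity)
      nlinarith [mul_nonneg (mul_nonneg (by linarith : (0:ℝ) ≤ 2 * (A - a))
          (by linarith : (0:ℝ) ≤ 2 * (A - a) * Yhat - (b - B - c)))
          (by linarith : (0:ℝ) ≤ (p - B) - 2 * A * Yhat),
        mul_nonneg hA.le (sq_nonneg (2 * (A - a) * Yhat - (b - B - c)))]
  constructor
  · rw [isMinOn_iff]
    intro p hp
    show Pi (phat + c) + pi phat ≤ Pi (p + c) + pi p
    rw [hfphat]
    have hsum : (-a * (b - B - c) ^ 2 / (4 * (A - a) ^ 2)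
        + (b - B - c) / (2 * (A - a)) * ((b - (p + c)) - -(a * (b - B - c)) / (A - a)))
        + (A * (b - B - c) ^ 2 / (4 * (A - a) ^ 2)
        + (b - B - c) / (2 * (A - a)) * ((p - B) - A * (b - B - c) / (A - a)))
        = (b - B - c) ^ 2 / (4 * (A - a)) := by
      field_simp; ring
    linarith [L1 (p + c), L2 p]
  · rw [max_eq_left he2pos, e2]
    field_simp
    ring
end

section
/- In the Cournot oligopoly with n identical carriers and linear inverse demand c(z) = b − B − 2(A−a)z (on the relevant range), the systemic efficiency ratio θ = (c(z_n) − c̃)·z_n / (Λ(c̃) − Λ(c(z_n))) at the Nash equilibrium total volume z_n = n(b−B−c̃)/(2(n+1)(A−a)) equals 2n/(2n+1); in particular θ → 1 as n → ∞. -/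
/-!
With `K = b - B - c̃`, the equilibrium markup is `c(z_n) - c̃ = K / (n + 1)`, so the profit is
`n K² / (2 (A - a) (n + 1)²)`. Demand is linear on `[c̃, c(z_n)]`, so the surplus integral is a
trapezoid of area `(2n + 1) K² / (4 (A - a) (n + 1)²)`, and the ratio is `2n / (2n + 1)`.
-/

open Filter Topology

theorem integral_max_sub_zero_div {M D p q : ℝ} (hp : p ≤ M) (hq : q ≤ M) :
    ∫ s in p..q, max (M - s) 0 / D = ((M - p) ^ 2 - (M - q) ^ 2) / (2 * D) := by
  have hlinear : Set.EqOn (fun s => max (M - s) 0 / D) (fun s => (M - s) / D) (Set.uIcc p q) := by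
    intro s hs
    have hsM : s ≤ M := (Set.mem_uIcc.mp hs).elim (fun h => h.2.trans hq) (fun h => h.2.trans hp)
    simp only [max_eq_left (sub_nonneg.mpr hsM)]
  rw [intervalIntegral.integral_congr hlinear, intervalIntegral.integral_div,
    intervalIntegral.integral_comp_sub_left (fun x => x) M, integral_id]
  ring

theorem tendsto_two_mul_div_two_mul_add_one :
    Tendsto (fun n : ℕ => 2 * (n : ℝ) / (2 * (n : ℝ) + 1)) atTop (𝓝 1) := by
  refine (tendsto_natCast_div_add_atTop (1 / 2 : ℝ)).congr fun n => ?_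
  field_simp

theorem stmt_7_general (a A b B ctil : ℝ)
    (ha : a < 0) (hA : 0 < A)
    (hpos : 0 < b - B - ctil)
    (z : ℝ → ℝ) (hz : ∀ c, z c = max (b - B - c) 0 / (2 * (A - a)))
    (cinv : ℝ → ℝ) (hcinv : ∀ v, cinv v = b - B - 2 * (A - a) * v)
    (zn : ℕ → ℝ)
    (hzn : ∀ n, zn n = (n : ℝ) * (b - B - ctil) / (2 * ((n : ℝ) + 1) * (A - a))) :
    (∀ n : ℕ, 1 ≤ n →
      (cinv (zn n) - ctil) * zn n / (∫ s in ctil..(cinv (zn n)), z s)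
        = 2 * (n : ℝ) / (2 * (n : ℝ) + 1)) ∧
    Filter.Tendsto (fun n : ℕ => 2 * (n : ℝ) / (2 * (n : ℝ) + 1)) Filter.atTop (nhds 1) := by
  refine ⟨fun n _ => ?_, tendsto_two_mul_div_two_mul_add_one⟩
  have hD : 0 < A - a := by linarith
  have hprice : cinv (zn n) = b - B - n * (b - B - ctil) / (n + 1) := by
    rw [hcinv, hzn]
    field_simp
  have hprice_le : cinv (zn n) ≤ b - B := by
    rw [hprice, sub_le_self_iff]
    positivity
  have hsurplus : ∫ s in ctil..(cinv (zn n)), z s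
      = (b - B - ctil) ^ 2 * (2 * n + 1) / (4 * (A - a) * (n + 1) ^ 2) := by
    rw [funext hz, integral_max_sub_zero_div (by linarith) hprice_le, hprice]
    field_simp
    ring
  rw [hsurplus, hprice, hzn]
  have hK : b - B - ctil ≠ 0 := hpos.ne'
  field_simp
  ring

/-- Systemic efficiency ratio `θ = 2n/(2n+1)` in the Cournot oligopoly, and `θ → 1`. -/
theorem stmt_7 (a A b B ctil : ℝ)
    (ha : a < 0) (hA : 0 < A) (hb : 0 < b) (hB : 0 < B) (hc : 0 < ctil)
    (hpos : 0 < b - B - ctil)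
    (z : ℝ → ℝ) (hz : ∀ c, z c = max (b - B - c) 0 / (2 * (A - a)))
    (cinv : ℝ → ℝ) (hcinv : ∀ v, cinv v = b - B - 2 * (A - a) * v)
    (zn : ℕ → ℝ)
    (hzn : ∀ n, zn n = (n : ℝ) * (b - B - ctil) / (2 * ((n : ℝ) + 1) * (A - a))) :
    (∀ n : ℕ, 1 ≤ n →
      (cinv (zn n) - ctil) * zn n / (∫ s in ctil..(cinv (zn n)), z s)
        = 2 * (n : ℝ) / (2 * (n : ℝ) + 1)) ∧
    Filter.Tendsto (fun n : ℕ => 2 * (n : ℝ) / (2 * (n : ℝ) + 1)) Filter.atTop (nhds 1) :=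
  stmt_7_general a A b B ctil ha hA hpos z hz cinv hcinv zn hzn
end

section
/- (Fenchel duality for the transport model, finite-dimensional case, one good, one producer, one consumer.) Let F: ℝ₊ → ℝ be concave, continuous, nondecreasing, and G: ℝ₊ → ℝ be convex, continuous, nondecreasing, with Π(p) = sup_{X≥0}(F(X) − pX) and π(p̂) = sup_{Y≥0}(p̂Y − G(Y)) finite for all relevant prices. Then sup{F(X) − G(Y) − cz : 0 ≤ X ≤ z, z ≤ Y} = inf{Π(p) + π(p̂) : 0 ≤ p ≤ p̂ + c, p̂ ≥ 0}, provided both optima are attained. -/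
/-- Existence of a common supergradient/subgradient at a point maximizing `f - g`
on `[0, ∞)`, with `f` concave, `g` convex and nondecreasing; the multiplier is
nonnegative. -/
lemma exists_common_grad (f g : ℝ → ℝ)
    (hf : ConcaveOn ℝ (Set.Ici 0) f) (hg : ConvexOn ℝ (Set.Ici 0) g)
    (hgm : MonotoneOn g (Set.Ici 0)) (x₀ : ℝ) (hx₀ : 0 ≤ x₀)
    (hopt : ∀ x, 0 ≤ x → f x - g x ≤ f x₀ - g x₀) :
    ∃ t, 0 ≤ t ∧ (∀ x, 0 ≤ x → f x ≤ f x₀ + t * (x - x₀)) ∧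
      (∀ x, 0 ≤ x → g x₀ + t * (x - x₀) ≤ g x) := by
  set a : ℝ → ℝ := fun x => (f x - f x₀) / (x - x₀) with ha_def
  set b : ℝ → ℝ := fun x => (g x - g x₀) / (x - x₀) with hb_def
  have hx₀m : x₀ ∈ Set.Ici (0:ℝ) := hx₀
  -- slope comparisons from optimality
  have hab_gt : ∀ x, x₀ < x → a x ≤ b x := by
    intro x hx
    have h1 : f x - f x₀ ≤ g x - g x₀ := by
      have := hopt x (le_trans hx₀ hx.le); linarith
    have hd : (0:ℝ) < x - x₀ := by linarith
    exact div_le_div_of_nonneg_right h1 hd.le |>.trans_eq rfl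
  have hba_lt : ∀ x, 0 ≤ x → x < x₀ → b x ≤ a x := by
    intro x hx hlt
    have h1 : f x - f x₀ ≤ g x - g x₀ := by
      have := hopt x hx; linarith
    have hd : x - x₀ < 0 := by linarith
    rw [hb_def, ha_def]
    exact div_le_div_of_nonpos_of_le hd.le h1
  -- nonnegativity of g-slopes
  have hb0 : ∀ x, 0 ≤ x → x ≠ x₀ → 0 ≤ b x := by
    intro x hx hne
    rcases lt_or_gt_of_ne hne with h | h
    · have hnum : g x - g x₀ ≤ 0 := by
        have := hgm (Set.mem_Ici.2 hx) hx₀m h.le; linarith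
      have hden : x - x₀ ≤ 0 := by linarith
      exact div_nonneg_of_nonpos hnum hden
    · have hnum : 0 ≤ g x - g x₀ := by
        have := hgm hx₀m (Set.mem_Ici.2 (le_trans hx₀ h.le)) h.le; linarith
      exact div_nonneg hnum (by linarith)
  -- monotonicity of g-slopes (convexity)
  have hbmono : ∀ x y, 0 ≤ x → 0 ≤ y → x ≠ x₀ → y ≠ x₀ → x ≤ y → b x ≤ b y := by
    intro x y hx hy hxn hyn hxy
    exact hg.secant_mono hx₀m (Set.mem_Ici.2 hx) (Set.mem_Ici.2 hy) hxn hyn hxy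
  -- antitonicity of f-slopes (concavity)
  have hamono : ∀ x y, 0 ≤ x → 0 ≤ y → x ≠ x₀ → y ≠ x₀ → x ≤ y → a y ≤ a x := by
    intro x y hx hy hxn hyn hxy
    have h := hf.neg.secant_mono hx₀m (Set.mem_Ici.2 hx) (Set.mem_Ici.2 hy) hxn hyn hxy
    simp only [Pi.neg_apply] at h
    have e1 : (-f x - -f x₀) / (x - x₀) = -a x := by
      rw [ha_def]; ring
    have e2 : (-f y - -f x₀) / (y - x₀) = -a y := by
      rw [ha_def]; ring
    rw [e1, e2] at h; linarith
  -- the two sets of slopes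
  set SA : Set ℝ := a '' Set.Ioi x₀ with hSA
  set SB : Set ℝ := insert (0:ℝ) (b '' Set.Ico 0 x₀) with hSB
  have hx₁ : x₀ < x₀ + 1 := by linarith
  set M : ℝ := b (x₀ + 1) with hM
  have hSAub : ∀ s ∈ SA, s ≤ M := by
    rintro s ⟨x, hx, rfl⟩
    have hx' : x₀ < x := hx
    rcases le_or_gt x (x₀ + 1) with h | h
    · exact (hab_gt x hx').trans
        (hbmono x (x₀+1) (le_trans hx₀ hx'.le) (by linarith) (ne_of_gt hx') (ne_of_gt hx₁) h)
    · exact (hamono (x₀+1) x (by linarith) (le_trans hx₀ hx'.le)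
        (ne_of_gt hx₁) (ne_of_gt hx') h.le).trans (hab_gt (x₀+1) hx₁)
  have hSBub : ∀ s ∈ SB, s ≤ M := by
    rintro s (rfl | ⟨x, hx, rfl⟩)
    · exact hb0 (x₀+1) (by linarith) (ne_of_gt hx₁)
    · exact hbmono x (x₀+1) hx.1 (by linarith) (ne_of_lt hx.2) (ne_of_gt hx₁) (by linarith [hx.2])
  have hSAne : SA.Nonempty := ⟨a (x₀+1), ⟨x₀+1, hx₁, rfl⟩⟩
  have hSBne : SB.Nonempty := ⟨0, Set.mem_insert _ _⟩
  have hSAbdd : BddAbove SA := ⟨M, hSAub⟩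
  have hSBbdd : BddAbove SB := ⟨M, hSBub⟩
  set A : ℝ := sSup SA with hA
  set B : ℝ := sSup SB with hB
  refine ⟨max A B, ?_, ?_, ?_⟩
  · exact le_trans (le_csSup hSBbdd (Set.mem_insert _ _)) (le_max_right _ _)
  · -- supergradient of f
    intro x hx
    rcases lt_trichotomy x x₀ with h | h | h
    · -- need  max A B ≤ a x
      have hAle : A ≤ a x := by
        apply csSup_le hSAne
        rintro s ⟨y, hy, rfl⟩
        exact hamono x y hx (le_trans hx₀ (le_of_lt hy)) (ne_of_lt h)
          (ne_of_gt hy) (le_of_lt (lt_trans h hy))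
      have hBle : B ≤ a x := by
        apply csSup_le hSBne
        rintro s (rfl | ⟨y, hy, rfl⟩)
        · exact le_trans (hb0 x hx (ne_of_lt h)) (hba_lt x hx h)
        · rcases le_or_gt y x with hyx | hyx
          · rcases eq_or_lt_of_le hyx with rfl | hyx'
            · exact hba_lt y hy.1 hy.2
            · exact (hbmono y x hy.1 hx (ne_of_lt hy.2) (ne_of_lt h) hyx'.le).trans
                (hba_lt x hx h)
          · exact (hba_lt y hy.1 hy.2).trans
              (hamono x y hx hy.1 (ne_of_lt h) (ne_of_lt hy.2) hyx.le)
      have ht : max A B ≤ a x := max_le hAle hBle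
      have hd : x - x₀ < 0 := by linarith
      rw [ha_def] at ht
      have := (le_div_iff_of_neg hd).1 ht
      linarith
    · subst h; simp
    · -- need  a x ≤ max A B
      have : a x ≤ A := le_csSup hSAbdd ⟨x, h, rfl⟩
      have ht : a x ≤ max A B := this.trans (le_max_left _ _)
      have hd : (0:ℝ) < x - x₀ := by linarith
      rw [ha_def] at ht
      have := (div_le_iff₀ hd).1 ht
      linarith
  · -- subgradient of g
    intro x hx
    rcases lt_trichotomy x x₀ with h | h | h
    · have : b x ≤ B := le_csSup hSBbdd (Set.mem_insert_of_mem _ ⟨x, ⟨hx, h⟩, rfl⟩)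
      have ht : b x ≤ max A B := this.trans (le_max_right _ _)
      have hd : x - x₀ < 0 := by linarith
      rw [hb_def] at ht
      have := (div_le_iff_of_neg hd).1 ht
      linarith
    · subst h; simp
    · have hAle : A ≤ b x := by
        apply csSup_le hSAne
        rintro s ⟨y, hy, rfl⟩
        have hy' : x₀ < y := hy
        rcases le_or_gt y x with hyx | hyx
        · rcases eq_or_lt_of_le hyx with rfl | hyx'
          · exact hab_gt y hy'
          · exact (hab_gt y hy').trans (hbmono y x (le_trans hx₀ hy'.le) hx
              (ne_of_gt hy') (ne_of_gt h) hyx'.le)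
        · exact (hamono x y hx (le_trans hx₀ hy'.le) (ne_of_gt h)
            (ne_of_gt hy') hyx.le).trans (hab_gt x h)
      have hBle : B ≤ b x := by
        apply csSup_le hSBne
        rintro s (rfl | ⟨y, hy, rfl⟩)
        · exact hb0 x hx (ne_of_gt h)
        · exact hbmono y x hy.1 hx (ne_of_lt hy.2) (ne_of_gt h) (by linarith [hy.2])
      have ht : max A B ≤ b x := max_le hAle hBle
      have hd : (0:ℝ) < x - x₀ := by linarith
      rw [hb_def] at ht
      have := (le_div_iff₀ hd).1 ht
      linarith

/-- Fenchel duality for the one-good, one-producer, one-consumer transport model: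
the attained primal and dual optimal values coincide. -/
theorem stmt_12 (c : ℝ) (hc : 0 ≤ c)
    (F G : ℝ → ℝ)
    (hFconc : ConcaveOn ℝ (Set.Ici 0) F) (hFcont : ContinuousOn F (Set.Ici 0))
    (hFmono : MonotoneOn F (Set.Ici 0))
    (hGconv : ConvexOn ℝ (Set.Ici 0) G) (hGcont : ContinuousOn G (Set.Ici 0))
    (hGmono : MonotoneOn G (Set.Ici 0))
    (Pi pi : ℝ → ℝ)
    (hPi : ∀ p, 0 ≤ p → IsLUB {t : ℝ | ∃ X, 0 ≤ X ∧ t = F X - p * X} (Pi p))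
    (hpi : ∀ p, 0 ≤ p → IsLUB {t : ℝ | ∃ Y, 0 ≤ Y ∧ t = p * Y - G Y} (pi p))
    (v w : ℝ)
    (hv : IsGreatest {t : ℝ | ∃ X z Y, 0 ≤ X ∧ X ≤ z ∧ z ≤ Y ∧
      t = F X - G Y - c * z} v)
    (hw : IsLeast {t : ℝ | ∃ p phat, 0 ≤ p ∧ 0 ≤ phat ∧ p ≤ phat + c ∧
      t = Pi p + pi phat} w) :
    v = w := by
  obtain ⟨⟨X₀, z₀, Y₀, hX₀, hXz, hzY, hveq⟩, hub⟩ := hv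
  obtain ⟨⟨p, q, hp, hq, hpq, hweq⟩, hlb⟩ := hw
  have hz₀ : 0 ≤ z₀ := le_trans hX₀ hXz
  have hY₀ : 0 ≤ Y₀ := le_trans hz₀ hzY
  -- weak duality : v ≤ w
  have hvw : v ≤ w := by
    have h1 : F X₀ - p * X₀ ≤ Pi p := (hPi p hp).1 ⟨X₀, hX₀, rfl⟩
    have h2 : q * Y₀ - G Y₀ ≤ pi q := (hpi q hq).1 ⟨Y₀, hY₀, rfl⟩
    have e1 : p * X₀ ≤ p * z₀ := mul_le_mul_of_nonneg_left hXz hp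
    have e2 : p * z₀ ≤ (q + c) * z₀ := mul_le_mul_of_nonneg_right hpq hz₀
    have e3 : q * z₀ ≤ q * Y₀ := mul_le_mul_of_nonneg_left hzY hq
    nlinarith [h1, h2, e1, e2, e3]
  -- strong duality : w ≤ v
  set f : ℝ → ℝ := fun x => F x - c * x with hf_def
  have hlin : ConvexOn ℝ (Set.Ici 0) (fun x : ℝ => c * x) := by
    refine ⟨convex_Ici 0, ?_⟩
    intro x _ y _ s t _ _ _
    simp only [smul_eq_mul]
    exact le_of_eq (by ring)
  have hfconc : ConcaveOn ℝ (Set.Ici 0) f := hFconc.sub hlin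
  have hvdiag : v ≤ F X₀ - G X₀ - c * X₀ := by
    have hG : G X₀ ≤ G Y₀ := hGmono (Set.mem_Ici.2 hX₀) (Set.mem_Ici.2 hY₀) (hXz.trans hzY)
    have hcz : c * X₀ ≤ c * z₀ := mul_le_mul_of_nonneg_left hXz hc
    linarith [hveq.ge]
  have hfopt : ∀ x, 0 ≤ x → f x - G x ≤ f X₀ - G X₀ := by
    intro x hx
    have hmem : F x - G x - c * x ≤ v := hub ⟨x, x, x, hx, le_refl x, le_refl x, rfl⟩
    simp only [hf_def]
    linarith
  obtain ⟨t, ht0, hsupg, hsubg⟩ :=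
    exists_common_grad f G hfconc hGconv hGmono X₀ hX₀ hfopt
  -- value of Pi at t + c
  have hPiVal : Pi (t + c) = F X₀ - (t + c) * X₀ := by
    refine ((hPi (t + c) (by linarith)).unique (IsGreatest.isLUB ⟨⟨X₀, hX₀, rfl⟩, ?_⟩))
    rintro s ⟨X, hX, rfl⟩
    have := hsupg X hX
    simp only [hf_def] at this
    nlinarith [this]
  -- value of pi at t
  have hpiVal : pi t = t * X₀ - G X₀ := by
    refine ((hpi t ht0).unique (IsGreatest.isLUB ⟨⟨X₀, hX₀, rfl⟩, ?_⟩))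
    rintro s ⟨Y, hY, rfl⟩
    have := hsubg Y hY
    nlinarith [this]
  have hdualmem : Pi (t + c) + pi t ∈
      {s : ℝ | ∃ p phat, 0 ≤ p ∧ 0 ≤ phat ∧ p ≤ phat + c ∧ s = Pi p + pi phat} :=
    ⟨t + c, t, by linarith, ht0, le_refl _, rfl⟩
  have hwle : w ≤ F X₀ - G X₀ - c * X₀ := by
    have := hlb hdualmem
    rw [hPiVal, hpiVal] at this
    linarith [this]
  have hdiagv : F X₀ - G X₀ - c * X₀ ≤ v :=
    hub ⟨X₀, X₀, X₀, hX₀, le_refl _, le_refl _, rfl⟩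
  linarith
end

section
/- If {X,Y,z,p,p̂} is a competitive equilibrium (one good, one producer, one consumer), i.e., (i) X maximizes F(x) − px over x ≥ 0, (ii) Y maximizes p̂y − G(y) over y ≥ 0, (iii) X ≤ z, p(X − z) = 0, (iv) Y ≥ z, p̂(Y − z) = 0, (v) p ≤ p̂ + c, z ≥ 0, z(p̂ + c − p) = 0, then (X,Y,z) solves the primal profit-maximization problem max{F(x) − G(y) − cs : x ≤ s ≤ y, x,y,s ≥ 0}, and the primal optimal value equals Π(p) + π(p̂). -/
/-- A competitive equilibrium solves the primal profit-maximization problem, and the primal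
optimal value equals the sum of the equilibrium profits. -/
theorem stmt_13 (c : ℝ) (hc : 0 ≤ c)
    (F G : ℝ → ℝ)
    (hFconc : ConcaveOn ℝ (Set.Ici 0) F) (hFcont : ContinuousOn F (Set.Ici 0))
    (hFmono : MonotoneOn F (Set.Ici 0))
    (hGconv : ConvexOn ℝ (Set.Ici 0) G) (hGcont : ContinuousOn G (Set.Ici 0))
    (hGmono : MonotoneOn G (Set.Ici 0))
    (X Y z p phat : ℝ)
    (hXnn : 0 ≤ X) (hYnn : 0 ≤ Y) (hznn : 0 ≤ z) (hpnn : 0 ≤ p) (hphatnn : 0 ≤ phat)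
    (h1 : IsMaxOn (fun x => F x - p * x) {x : ℝ | 0 ≤ x} X)
    (h2 : IsMaxOn (fun y => phat * y - G y) {y : ℝ | 0 ≤ y} Y)
    (h3 : X ≤ z) (h3' : p * (X - z) = 0)
    (h4 : z ≤ Y) (h4' : phat * (Y - z) = 0)
    (h5 : p ≤ phat + c) (h5' : z * (phat + c - p) = 0)
    (PiP piP : ℝ)
    (hPi : IsLUB {t : ℝ | ∃ x, 0 ≤ x ∧ t = F x - p * x} PiP)
    (hpi : IsLUB {t : ℝ | ∃ y, 0 ≤ y ∧ t = phat * y - G y} piP) :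
    IsGreatest {t : ℝ | ∃ x s y, 0 ≤ x ∧ x ≤ s ∧ s ≤ y ∧ t = F x - G y - c * s}
      (F X - G Y - c * z) ∧
    F X - G Y - c * z = PiP + piP := by
  have hPiG : IsGreatest {t : ℝ | ∃ x, 0 ≤ x ∧ t = F x - p * x} (F X - p * X) := by
    constructor
    · exact ⟨X, hXnn, rfl⟩
    · rintro t ⟨x, hx, rfl⟩
      exact h1 hx
  have hpiG : IsGreatest {t : ℝ | ∃ y, 0 ≤ y ∧ t = phat * y - G y} (phat * Y - G Y) := by
    constructor
    · exact ⟨Y, hYnn, rfl⟩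
    · rintro t ⟨y, hy, rfl⟩
      exact h2 hy
  have hPeq : PiP = F X - p * X := hPi.unique hPiG.isLUB
  have hpeq : piP = phat * Y - G Y := hpi.unique hpiG.isLUB
  have key : p * X - phat * Y = c * z := by nlinarith [h3', h4', h5']
  constructor
  · constructor
    · exact ⟨X, z, Y, hXnn, h3, h4, rfl⟩
    · rintro t ⟨x, s, y, hx, hxs, hsy, rfl⟩
      have hF : F x - p * x ≤ F X - p * X := h1 hx
      have hG : phat * y - G y ≤ phat * Y - G Y := h2 (le_trans (le_trans hx hxs) hsy)
      have hs0 : 0 ≤ s := le_trans hx hxs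
      nlinarith [mul_nonneg hpnn (sub_nonneg.2 hxs), mul_nonneg hs0 (sub_nonneg.2 h5),
        mul_nonneg hphatnn (sub_nonneg.2 hsy)]
  · rw [hPeq, hpeq]; linarith [key]
end
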